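/- Let q, z be complex numbers with |q| < 1 and |z| < 1, and let n ≥ 0 be an integer. Then Σ_{λ} z^{|λ|} q^{2n(λ)} [n, λ] = 1 / (z;q)_n, where the sum is over all partitions λ (only those with λ₁ ≤ n contribute, by the convention on q-binomial coefficients). -/

import Mathlib

open scoped BigOperators Classical

/-- The finite q-Pochhammer symbol `(x;q)_n = ∏_{j=0}^{n-1} (1 - x q^j)`. -/
noncomputable def qPoch (x q : ℂ) (n : ℕ) : ℂ :=
  ∏ j ∈ Finset.range n, (1 - x * q ^ j)

/-- Partitions: weakly decreasing sequences of naturals with finitely many nonzero terms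
(index `i` carries `λ_{i+1}`). -/
def Ptn : Type :=
  {f : ℕ → ℕ // Antitone f ∧ ∃ N, ∀ i, N ≤ i → f i = 0}

/-- The size `|λ| = Σ_i λ_i` of a partition. -/
noncomputable def Ptn.size (L : Ptn) : ℕ := ∑' i, L.1 i

/-- `n(λ) = Σ_i λ_i (λ_i - 1) / 2`. -/
noncomputable def Ptn.nfun (L : Ptn) : ℕ := ∑' i, Nat.choose (L.1 i) 2

/-- The q-binomial coefficient `[n, λ] = (q)_n / ((q)_{n-λ₁} (q)_λ)` for a partition `λ`,
with the convention that it vanishes when `λ₁ > n`. -/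
noncomputable def qBinomP (q : ℂ) (n : ℕ) (L : Ptn) : ℂ :=
  if L.1 0 ≤ n then
    qPoch q q n / (qPoch q q (n - L.1 0) * ∏' i : ℕ, qPoch q q (L.1 i - L.1 (i + 1)))
  else 0

/-!
Removing the largest part `k` of `λ` factors `[n, λ] = [n, k] [k, λ₂λ₃…]`, so the sums
`S n = Σ_λ z^|λ| q^(2n(λ)) [n, λ]` satisfy the triangular recursion
`S n = Σ_{k ≤ n} [n, k] z^k q^(k(k-1)) S k`, whose diagonal coefficient `z^n q^(n(n-1))` has
modulus `< 1` for `n > 0`; hence `S` is determined by `S 0 = 1`. The sequence `1 / (z;q)_n`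
satisfies the same recursion, which amounts to the polynomial identity
`Σ_k [n, k] z^k q^(k(k-1)) (z q^k;q)_{n-k} = 1`: by the q-Pascal rule its left side at `n + 1`
telescopes to the left side at `n` with `z` replaced by `z q`.

Convergence: `|[n, λ]| ≤ |(q)_n| / (1 - |q|)^n`, and the conjugate partition embeds
`{λ | λ₁ ≤ n}` into `ℕⁿ` with `|λ|` the sum of the coordinates.
-/

open Finset

@[simp] theorem qPoch_zero (x q : ℂ) : qPoch x q 0 = 1 := rfl

theorem qPoch_succ (x q : ℂ) (n : ℕ) : qPoch x q (n + 1) = qPoch x q n * (1 - x * q ^ n) :=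
  prod_range_succ _ n

theorem qPoch_add (x q : ℂ) (a b : ℕ) :
    qPoch x q (a + b) = qPoch x q a * qPoch (x * q ^ a) q b := by
  simp only [qPoch, prod_range_add, mul_assoc, pow_add]

theorem qPoch_succ' (x q : ℂ) (n : ℕ) : qPoch x q (n + 1) = (1 - x) * qPoch (x * q) q n := by
  rw [add_comm, qPoch_add, pow_one]
  simp [qPoch]

theorem pow_one_sub_norm_le_norm_qPoch {x q : ℂ} (hx : ‖x‖ ≤ 1) (hq : ‖q‖ ≤ 1) (n : ℕ) :
    (1 - ‖x‖) ^ n ≤ ‖qPoch x q n‖ := by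
  rw [qPoch, norm_prod, pow_eq_prod_const]
  refine prod_le_prod (fun _ _ => sub_nonneg.2 hx) fun j _ => ?_
  calc 1 - ‖x‖ ≤ 1 - ‖x * q ^ j‖ := by
        rw [norm_mul, norm_pow]
        gcongr
        exact mul_le_of_le_one_right (norm_nonneg x) (pow_le_one₀ (norm_nonneg q) hq)
    _ ≤ ‖1 - x * q ^ j‖ := by simpa using norm_sub_norm_le (1 : ℂ) (x * q ^ j)

theorem qPoch_ne_zero {x q : ℂ} (hx : ‖x‖ < 1) (hq : ‖q‖ ≤ 1) (n : ℕ) : qPoch x q n ≠ 0 :=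
  norm_pos_iff.1 <|
    (pow_pos (sub_pos.2 hx) n).trans_le (pow_one_sub_norm_le_norm_qPoch hx.le hq n)

section qBinom

variable {R : Type*} [CommSemiring R]

def qBinom (q : R) : ℕ → ℕ → R
  | _, 0 => 1
  | 0, _ + 1 => 0
  | n + 1, k + 1 => qBinom q n k + q ^ (k + 1) * qBinom q n (k + 1)

@[simp] theorem qBinom_zero_right (q : R) (n : ℕ) : qBinom q n 0 = 1 := by
  cases n <;> rfl

theorem qBinom_succ_succ (q : R) (n k : ℕ) :
    qBinom q (n + 1) (k + 1) = qBinom q n k + q ^ (k + 1) * qBinom q n (k + 1) := rfl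

theorem qBinom_eq_zero_of_lt (q : R) {n k : ℕ} (h : n < k) : qBinom q n k = 0 := by
  induction n generalizing k with
  | zero => obtain ⟨k, rfl⟩ := Nat.exists_eq_succ_of_ne_zero h.ne'; rfl
  | succ n ih =>
    obtain ⟨k, rfl⟩ := Nat.exists_eq_succ_of_ne_zero (Nat.ne_zero_of_lt h)
    rw [qBinom_succ_succ, ih (by omega), ih (by omega), mul_zero, add_zero]

@[simp] theorem qBinom_self (q : R) (n : ℕ) : qBinom q n n = 1 := by
  induction n with
  | zero => rfl
  | succ n ih =>
    rw [qBinom_succ_succ, ih, qBinom_eq_zero_of_lt q n.lt_succ_self, mul_zero, add_zero]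

end qBinom

theorem qBinom_mul_qPoch_mul_qPoch (q : ℂ) {n k : ℕ} (h : k ≤ n) :
    qBinom q n k * (qPoch q q k * qPoch q q (n - k)) = qPoch q q n := by
  induction n generalizing k with
  | zero => obtain rfl := Nat.le_zero.1 h; simp
  | succ n ih =>
    rcases k with _ | k
    · simp
    rcases (Nat.succ_le_succ_iff.1 h).eq_or_lt with rfl | hk
    · simp
    · obtain ⟨m, rfl⟩ := Nat.exists_eq_add_of_lt hk
      have h₁ := ih (k := k) (by omega)
      have h₂ := ih (k := k + 1) (by omega)
      rw [qBinom_succ_succ]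
      simp only [show k + m + 1 - k = m + 1 by omega, show k + m + 1 - (k + 1) = m by omega,
        show k + m + 1 + 1 - (k + 1) = m + 1 by omega, qPoch_succ] at h₁ h₂ ⊢
      linear_combination (1 - q * q ^ k) * h₁ + q ^ (k + 1) * (1 - q * q ^ m) * h₂

theorem sum_qBinom_mul_qPoch (q z : ℂ) (n : ℕ) :
    ∑ k ∈ range (n + 1),
      qBinom q n k * z ^ k * q ^ (2 * k.choose 2) * qPoch (z * q ^ k) q (n - k) = 1 := by
  induction n generalizing z with
  | zero => simp
  | succ n ih =>
    -- `t k` is the `k`-th term at `n` and `z * q`; by q-Pascal the `(k+1)`-th term at `n + 1`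
    -- is `t (k + 1) + v k - v (k + 1)`, and the sum telescopes.
    set t : ℕ → ℂ := fun k =>
      qBinom q n k * (z * q) ^ k * q ^ (2 * k.choose 2) * qPoch (z * q ^ (k + 1)) q (n - k)
    set v : ℕ → ℂ := fun k =>
      qBinom q n k * z ^ (k + 1) * q ^ (2 * (k + 1).choose 2) * qPoch (z * q ^ (k + 1)) q (n - k)
    have ht : ∑ k ∈ range (n + 1), t k = 1 := by
      rw [← ih (z * q)]
      refine sum_congr rfl fun k _ => ?_
      simp only [t, mul_assoc, pow_succ']
    have hv : v (n + 1) = 0 := by simp [v, qBinom_eq_zero_of_lt]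
    have ht' : t (n + 1) = 0 := by simp [t, qBinom_eq_zero_of_lt]
    have h₀ : qPoch z q (n + 1) = t 0 - v 0 := by simp [t, v, qPoch_succ', sub_mul]
    have h_succ : ∀ k ∈ range (n + 1),
        qBinom q (n + 1) (k + 1) * z ^ (k + 1) * q ^ (2 * (k + 1).choose 2)
          * qPoch (z * q ^ (k + 1)) q (n + 1 - (k + 1)) = t (k + 1) + (v k - v (k + 1)) := by
      intro k hk
      rcases (mem_range_succ_iff.1 hk).lt_or_eq with hk | rfl
      · obtain ⟨m, rfl⟩ := Nat.exists_eq_add_of_lt hk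
        have hP : qPoch (z * q ^ (k + 1)) q (m + 1)
            = (1 - z * q ^ (k + 1)) * qPoch (z * q ^ (k + 1 + 1)) q m := by
          rw [qPoch_succ', mul_assoc, ← pow_succ]
        have hc : (k + 1 + 1).choose 2 = (k + 1).choose 2 + (k + 1) := by
          rw [Nat.choose_succ_succ', Nat.choose_one_right, add_comm]
        simp only [t, v, show k + m + 1 + 1 - (k + 1) = m + 1 by omega,
          show k + m + 1 - k = m + 1 by omega, show k + m + 1 - (k + 1) = m by omega]
        rw [qBinom_succ_succ, hP, hc]
        ring
      · simp [t, v, qBinom_eq_zero_of_lt]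
    rw [sum_range_succ', sum_congr rfl h_succ, sum_add_distrib, sum_range_sub', ← ht,
      sum_range_succ, sum_range_succ' t, ht', hv]
    simp [h₀]

theorem sum_qBinom_mul_inv_qPoch {q z : ℂ} (hq : ‖q‖ ≤ 1) (hz : ‖z‖ < 1) (n : ℕ) :
    ∑ k ∈ range (n + 1), qBinom q n k * z ^ k * q ^ (2 * k.choose 2) * (qPoch z q k)⁻¹
      = (qPoch z q n)⁻¹ := by
  apply eq_inv_of_mul_eq_one_left
  rw [sum_mul, ← sum_qBinom_mul_qPoch q z n]
  refine sum_congr rfl fun k hk => ?_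
  rw [← Nat.add_sub_of_le (mem_range_succ_iff.1 hk), qPoch_add, Nat.add_sub_cancel_left]
  field_simp [qPoch_ne_zero hz hq k]

namespace Ptn

def empty : Ptn := ⟨0, antitone_const, 0, fun _ _ => rfl⟩

def cons (k : ℕ) (M : Ptn) (h : M.1 0 ≤ k) : Ptn :=
  ⟨fun | 0 => k | i + 1 => M.1 i,
    antitone_nat_of_succ_le fun | 0 => h | i + 1 => M.2.1 i.le_succ,
    by obtain ⟨N, hN⟩ := M.2.2
       exact ⟨N + 1, fun | 0, _ => by omega | i + 1, h => hN i (by omega)⟩⟩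

@[simp] theorem cons_apply_zero (k : ℕ) (M : Ptn) (h : M.1 0 ≤ k) : (cons k M h).1 0 = k := rfl

def tail (L : Ptn) : Ptn :=
  ⟨fun i => L.1 (i + 1), fun _ _ h => L.2.1 (Nat.succ_le_succ h),
    let ⟨N, hN⟩ := L.2.2; ⟨N, fun i h => hN (i + 1) (by omega)⟩⟩

theorem cons_tail (L : Ptn) : cons (L.1 0) (tail L) (L.2.1 (Nat.zero_le 1)) = L := by
  apply Subtype.ext
  funext i
  cases i <;> rfl

def consEquiv : {p : ℕ × Ptn // p.2.1 0 ≤ p.1} ≃ Ptn where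
  toFun p := cons p.1.1 p.1.2 p.2
  invFun L := ⟨(L.1 0, tail L), L.2.1 (Nat.zero_le 1)⟩
  left_inv _ := rfl
  right_inv := cons_tail

theorem eq_empty_of_apply_zero_eq_zero {L : Ptn} (h : L.1 0 = 0) : L = empty :=
  Subtype.ext <| funext fun i => Nat.le_zero.1 <| (L.2.1 (Nat.zero_le i)).trans h.le

@[elab_as_elim]
theorem induction_on {P : Ptn → Prop} (L : Ptn) (empty : P empty)
    (cons : ∀ k M h, P M → P (cons k M h)) : P L := by
  obtain ⟨N, hN⟩ := L.2.2
  induction N generalizing L with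
  | zero => rwa [eq_empty_of_apply_zero_eq_zero (hN 0 le_rfl)]
  | succ N ih =>
    rw [← cons_tail L]
    exact cons _ _ _ (ih (tail L) fun i hi => hN (i + 1) (by omega))

@[to_additive]
theorem hasFiniteMulSupport {M : Type*} [One M] (L : Ptn) {g : ℕ → ℕ → M} (hg : g 0 0 = 1) :
    Function.HasFiniteMulSupport fun i => g (L.1 i) (L.1 (i + 1)) := by
  obtain ⟨N, hN⟩ := L.2.2
  refine (Set.finite_Iio N).subset fun i hi => Set.mem_Iio.2 ?_
  by_contra h
  apply hi
  show g (L.1 i) (L.1 (i + 1)) = 1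
  rw [hN i (by omega), hN (i + 1) (by omega), hg]

theorem size_cons (k : ℕ) (M : Ptn) (h : M.1 0 ≤ k) : (cons k M h).size = k + M.size :=
  tsum_eq_zero_add' (summable_of_hasFiniteSupport (M.hasFiniteSupport (g := fun a _ => a) rfl))

theorem nfun_cons (k : ℕ) (M : Ptn) (h : M.1 0 ≤ k) :
    (cons k M h).nfun = k.choose 2 + M.nfun :=
  tsum_eq_zero_add'
    (summable_of_hasFiniteSupport (M.hasFiniteSupport (g := fun a _ => a.choose 2) rfl))

@[simp] theorem size_empty : empty.size = 0 := tsum_zero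

@[simp] theorem nfun_empty : empty.nfun = 0 := tsum_zero

end Ptn

/-- `(q)_λ`. -/
noncomputable def qPochPtn (q : ℂ) (L : Ptn) : ℂ := ∏' i, qPoch q q (L.1 i - L.1 (i + 1))

@[simp] theorem qPochPtn_empty (q : ℂ) : qPochPtn q Ptn.empty = 1 := tprod_one

theorem qPochPtn_cons (q : ℂ) (k : ℕ) (M : Ptn) (h : M.1 0 ≤ k) :
    qPochPtn q (Ptn.cons k M h) = qPoch q q (k - M.1 0) * qPochPtn q M :=
  tprod_eq_zero_mul' (multipliable_of_hasFiniteMulSupport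
    (M.hasFiniteMulSupport (g := fun a b => qPoch q q (a - b)) rfl))

theorem pow_one_sub_norm_le_norm_qPochPtn {q : ℂ} (hq : ‖q‖ ≤ 1) (L : Ptn) :
    (1 - ‖q‖) ^ L.1 0 ≤ ‖qPochPtn q L‖ := by
  induction L using Ptn.induction_on with
  | empty => rw [qPochPtn_empty, norm_one]; exact (pow_zero _).le
  | cons k M h ih =>
    calc (1 - ‖q‖) ^ (Ptn.cons k M h).1 0
          = (1 - ‖q‖) ^ (k - M.1 0) * (1 - ‖q‖) ^ M.1 0 := by
          rw [← pow_add, Nat.sub_add_cancel h, Ptn.cons_apply_zero]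
      _ ≤ ‖qPoch q q (k - M.1 0)‖ * ‖qPochPtn q M‖ :=
          mul_le_mul (pow_one_sub_norm_le_norm_qPoch hq hq _) ih (pow_nonneg (sub_nonneg.2 hq) _)
            (norm_nonneg _)
      _ = ‖qPochPtn q (Ptn.cons k M h)‖ := by rw [qPochPtn_cons, norm_mul]

theorem qPochPtn_ne_zero {q : ℂ} (hq : ‖q‖ < 1) (L : Ptn) : qPochPtn q L ≠ 0 :=
  norm_pos_iff.1 <|
    (pow_pos (sub_pos.2 hq) _).trans_le (pow_one_sub_norm_le_norm_qPochPtn hq.le L)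

theorem qBinomP_of_le {q : ℂ} {n : ℕ} {L : Ptn} (h : L.1 0 ≤ n) :
    qBinomP q n L = qPoch q q n / (qPoch q q (n - L.1 0) * qPochPtn q L) :=
  if_pos h

theorem qBinomP_of_lt {q : ℂ} {n : ℕ} {L : Ptn} (h : n < L.1 0) : qBinomP q n L = 0 :=
  if_neg (not_le.2 h)

theorem qBinomP_cons {q : ℂ} (hq : ‖q‖ < 1) (n k : ℕ) (M : Ptn) (h : M.1 0 ≤ k) :
    qBinomP q n (Ptn.cons k M h) = qBinom q n k * qBinomP q k M := by
  rcases le_or_gt k n with hk | hk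
  · rw [qBinomP_of_le (L := Ptn.cons k M h) hk, qBinomP_of_le h, qPochPtn_cons,
      ← qBinom_mul_qPoch_mul_qPoch q hk, Ptn.cons_apply_zero]
    field_simp [qPoch_ne_zero hq hq.le (n - k), qPoch_ne_zero hq hq.le (k - M.1 0),
      qPochPtn_ne_zero hq M]
  · rw [qBinomP_of_lt (L := Ptn.cons k M h) hk, qBinom_eq_zero_of_lt q hk, zero_mul]

theorem norm_qBinomP_le {q : ℂ} (hq : ‖q‖ < 1) (n : ℕ) (L : Ptn) :
    ‖qBinomP q n L‖ ≤ ‖qPoch q q n‖ / (1 - ‖q‖) ^ n := by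
  rcases le_or_gt (L.1 0) n with h | h
  · -- the denominator of `[n, λ]` is `(q)_μ` for `μ = (n, λ₁, λ₂, …)`
    rw [qBinomP_of_le h, ← qPochPtn_cons q n L h, norm_div]
    exact div_le_div_of_nonneg_left (norm_nonneg _) (pow_pos (sub_pos.2 hq) n)
      (pow_one_sub_norm_le_norm_qPochPtn hq.le (Ptn.cons n L h))
  · rw [qBinomP_of_lt h, norm_zero]
    positivity

theorem summable_fin_prod_of_nonneg {f : ℕ → ℝ} (hf₀ : ∀ k, 0 ≤ f k) (hf : Summable f) (n : ℕ) :
    Summable fun x : Fin n → ℕ => ∏ i, f (x i) := by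
  induction n with
  | zero => exact summable_of_hasFiniteSupport (Set.toFinite _)
  | succ n ih =>
    have hprod := hf.mul_of_nonneg ih hf₀ fun x => prod_nonneg fun i _ => hf₀ (x i)
    refine (Fin.consEquiv fun _ => ℕ).summable_iff.1 ?_
    simpa [Function.comp_def, Fin.prod_univ_succ] using hprod

theorem card_filter_range_lt {m n : ℕ} (h : m ≤ n) : #{v ∈ range n | v < m} = m := by
  rw [← Nat.Iio_eq_range, Iio_filter_lt, Nat.card_Iio, min_eq_right h]

namespace Ptn

/-- The conjugate partition: `L.conj v = λ'_{v+1}` is the number of parts of `L` exceeding `v`. -/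
noncomputable def conj (L : Ptn) (v : ℕ) : ℕ := sInf {i | L.1 i ≤ v}

theorem lt_conj_iff (L : Ptn) (v i : ℕ) : i < L.conj v ↔ v < L.1 i := by
  obtain ⟨N, hN⟩ := L.2.2
  have hne : {i | L.1 i ≤ v}.Nonempty := ⟨N, by simp [hN N le_rfl]⟩
  rw [← not_le, ← not_le, not_iff_not]
  exact ⟨fun h => (L.2.1 h).trans (Nat.sInf_mem hne), fun h => Nat.sInf_le h⟩

theorem apply_eq_card_conj {L : Ptn} {n : ℕ} (hL : L.1 0 ≤ n) (i : ℕ) :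
    L.1 i = #{v ∈ range n | i < L.conj v} := by
  simp_rw [lt_conj_iff]
  exact (card_filter_range_lt ((L.2.1 (Nat.zero_le i)).trans hL)).symm

theorem size_eq_sum_conj {L : Ptn} {n : ℕ} (hL : L.1 0 ≤ n) :
    L.size = ∑ v ∈ range n, L.conj v := by
  obtain ⟨N, hN⟩ := L.2.2
  have hconj (v : ℕ) : L.conj v ≤ N :=
    not_lt.1 fun h => by simpa [hN N le_rfl] using (L.lt_conj_iff v N).1 h
  calc L.size = ∑ i ∈ range N, L.1 i := tsum_eq_sum fun i hi => hN i (by simpa using hi)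
    _ = ∑ i ∈ range N, #{v ∈ range n | i < L.conj v} :=
        sum_congr rfl fun i _ => apply_eq_card_conj hL i
    _ = ∑ v ∈ range n, #{i ∈ range N | i < L.conj v} :=
        sum_card_bipartiteAbove_eq_sum_card_bipartiteBelow (fun i v => i < L.conj v)
    _ = ∑ v ∈ range n, L.conj v := sum_congr rfl fun v _ => card_filter_range_lt (hconj v)

theorem summable_pow_size {r : ℝ} (hr₀ : 0 ≤ r) (hr₁ : r < 1) (n : ℕ) :
    Summable fun L : {L : Ptn // L.1 0 ≤ n} => r ^ L.1.size := by
  have hinj : Function.Injective fun (L : {L : Ptn // L.1 0 ≤ n}) (v : Fin n) => L.1.conj v := by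
    intro L M h
    refine Subtype.ext <| Subtype.ext <| funext fun i => ?_
    rw [apply_eq_card_conj L.2, apply_eq_card_conj M.2]
    exact congrArg card <| filter_congr fun v hv => by
      rw [show L.1.conj v = M.1.conj v from congrFun h ⟨v, mem_range.1 hv⟩]
  refine ((summable_fin_prod_of_nonneg (fun k => pow_nonneg hr₀ k)
    (summable_geometric_of_lt_one hr₀ hr₁) n).comp_injective hinj).congr fun L => ?_
  simp [size_eq_sum_conj L.2, prod_pow_eq_pow_sum, Fin.sum_univ_eq_sum_range (L.1.conj ·)]

end Ptn

noncomputable def hallTerm (q z : ℂ) (n : ℕ) (L : Ptn) : ℂ :=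
  z ^ L.size * q ^ (2 * L.nfun) * qBinomP q n L

section hallTerm

variable {q z : ℂ}

theorem hallTerm_of_lt {n : ℕ} {L : Ptn} (h : n < L.1 0) : hallTerm q z n L = 0 := by
  rw [hallTerm, qBinomP_of_lt h, mul_zero]

theorem hallTerm_cons (hq : ‖q‖ < 1) (n k : ℕ) (M : Ptn) (h : M.1 0 ≤ k) :
    hallTerm q z n (Ptn.cons k M h)
      = qBinom q n k * z ^ k * q ^ (2 * k.choose 2) * hallTerm q z k M := by
  rw [hallTerm, hallTerm, Ptn.size_cons, Ptn.nfun_cons, qBinomP_cons hq]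
  ring

theorem summable_hallTerm (hq : ‖q‖ < 1) (hz : ‖z‖ < 1) (n : ℕ) :
    Summable (hallTerm q z n) := by
  have hbound := (Ptn.summable_pow_size (norm_nonneg z) hz n).mul_left
    (‖qPoch q q n‖ / (1 - ‖q‖) ^ n)
  refine (Subtype.val_injective.summable_iff fun L hL => hallTerm_of_lt ?_).1 <|
    hbound.of_norm_bounded fun L => ?_
  · exact not_le.1 fun h => hL ⟨⟨L, h⟩, rfl⟩
  · rw [Function.comp_apply, hallTerm, norm_mul, norm_mul, norm_pow, norm_pow]
    calc _ ≤ ‖z‖ ^ L.1.size * 1 * (‖qPoch q q n‖ / (1 - ‖q‖) ^ n) := by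
          gcongr
          · exact pow_le_one₀ (norm_nonneg q) hq.le
          · exact norm_qBinomP_le hq n L
      _ = _ := by ring

theorem tsum_hallTerm_zero : ∑' L, hallTerm q z 0 L = 1 := by
  rw [tsum_eq_single Ptn.empty fun L hL => hallTerm_of_lt <|
    Nat.pos_of_ne_zero fun h => hL (Ptn.eq_empty_of_apply_zero_eq_zero h),
    hallTerm, qBinomP_of_le (Nat.zero_le 0)]
  simp

theorem tsum_hallTerm (hq : ‖q‖ < 1) (hz : ‖z‖ < 1) (n : ℕ) :
    ∑' L, hallTerm q z n L
      = ∑ k ∈ range (n + 1),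
          qBinom q n k * z ^ k * q ^ (2 * k.choose 2) * ∑' M, hallTerm q z k M := by
  set g : ℕ × Ptn → ℂ := fun p =>
    qBinom q n p.1 * z ^ p.1 * q ^ (2 * p.1.choose 2) * hallTerm q z p.1 p.2
  have hcons (p : {p : ℕ × Ptn // p.2.1 0 ≤ p.1}) : hallTerm q z n (Ptn.consEquiv p) = g p :=
    hallTerm_cons hq n _ _ p.2
  have hg (p : ℕ × Ptn) (hp : ¬ p.2.1 0 ≤ p.1) : g p = 0 := by
    simp only [g, hallTerm_of_lt (not_le.1 hp), mul_zero]
  have hsum : Summable g := by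
    refine (Subtype.val_injective.summable_iff fun p hp => hg p fun h => hp ⟨⟨p, h⟩, rfl⟩).1 ?_
    simpa [Function.comp_def, hcons] using
      Ptn.consEquiv.summable_iff.2 (summable_hallTerm hq hz n)
  calc ∑' L, hallTerm q z n L = ∑' p : {p : ℕ × Ptn // p.2.1 0 ≤ p.1}, g p := by
        rw [← Ptn.consEquiv.tsum_eq]; exact tsum_congr hcons
    _ = ∑' p, g p := tsum_subtype_eq_of_support_subset (s := {p : ℕ × Ptn | p.2.1 0 ≤ p.1})
        fun p hp => by_contra fun h => hp (hg p h)
    _ = ∑' k, ∑' M, g (k, M) := hsum.tsum_prod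
    _ = ∑' k, qBinom q n k * z ^ k * q ^ (2 * k.choose 2) * ∑' M, hallTerm q z k M := by
        simp only [g, tsum_mul_left]
    _ = _ := tsum_eq_sum fun k hk => by
        rw [qBinom_eq_zero_of_lt q (by simpa using hk)]; simp

end hallTerm

theorem eq_of_triangular_recursion {K : Type*} [Field K] {c : ℕ → ℕ → K} {S T : ℕ → K}
    (hc : ∀ n, 0 < n → c n n ≠ 1) (h₀ : S 0 = T 0)
    (hS : ∀ n, S n = ∑ k ∈ range (n + 1), c n k * S k)
    (hT : ∀ n, T n = ∑ k ∈ range (n + 1), c n k * T k) : S = T := by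
  funext n
  induction n using Nat.strong_induction_on with
  | _ n ih =>
    rcases n.eq_zero_or_pos with rfl | hn
    · exact h₀
    have hlow : ∑ k ∈ range n, c n k * S k = ∑ k ∈ range n, c n k * T k :=
      sum_congr rfl fun k hk => by rw [ih k (mem_range.1 hk)]
    have hS' := hS n
    have hT' := hT n
    rw [sum_range_succ] at hS' hT'
    have hdiag : (1 - c n n) * (S n - T n) = 0 := by linear_combination hS' - hT' + hlow
    exact sub_eq_zero.1 <| (mul_eq_zero.1 hdiag).resolve_left (sub_ne_zero.2 (hc n hn).symm)

theorem hall_identity (q z : ℂ) (hq : ‖q‖ < 1) (hz : ‖z‖ < 1) (n : ℕ) :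
    ∑' L : Ptn, z ^ L.size * q ^ (2 * L.nfun) * qBinomP q n L = (qPoch z q n)⁻¹ := by
  have hdiag (n : ℕ) (hn : 0 < n) : qBinom q n n * z ^ n * q ^ (2 * n.choose 2) ≠ 1 := by
    refine ne_of_apply_ne norm (ne_of_lt ?_)
    rw [qBinom_self, one_mul, norm_mul, norm_one, norm_pow, norm_pow]
    calc ‖z‖ ^ n * ‖q‖ ^ (2 * n.choose 2) ≤ ‖z‖ ^ n :=
          mul_le_of_le_one_right (by positivity) (pow_le_one₀ (norm_nonneg q) hq.le)
      _ < 1 := pow_lt_one₀ (norm_nonneg z) hz hn.ne'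
  exact congrFun (eq_of_triangular_recursion hdiag (by simpa using tsum_hallTerm_zero)
    (tsum_hallTerm hq hz) fun n => (sum_qBinom_mul_inv_qPoch hq.le hz n).symm) n
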